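/- Uniqueness of the coefficient family A: let A_{β,k₁;γ,k₂} ∈ ℂ (β,γ ∈ ℤ; k₁,k₂ ∈ ℤ_{≥0}) satisfy A_{β,k₁;γ,k₂} = A_{γ,k₂;β,k₁} and A_{β,k₁;γ,k₂} = 0 whenever k₁ + k₂ is odd, and set A_{α₁,α₂}(z₁,z₂) := Σ_{k₁,k₂≥0} A_{α₁,k₁;α₂,k₂} z₁^{k₁} z₂^{k₂}. Suppose that for all α₁, α₂ ∈ ℤ with α := α₁ + α₂, the identity (1 + z₁∂_{z₁} + z₂∂_{z₂}) [ S(α₁z₂ − α₂z₁) (1/T_α)(z₁+z₂) ] = A_{α₁,α₂}(z₁,z₂) · (1/T_{α₁})(z₁) · (1/T_{α₂})(z₂) + S(α₁z₂ − α₂z₁) (1/T_α)(z₁+z₂) · Σ_{h≥1} A_{0,1;α,2h−1} (z₁+z₂)^{2h} holds in ℂ[[z₁,z₂]]. Then A is uniquely determined, and in fact A_{α₁,α₂}(z₁,z₂) = (T_{α₁}(z₁) T_{α₂}(z₂) / T_{α₁+α₂}(z₁+z₂)) · (ζ̄(α₁z₂ − α₂z₁)/2) for all α₁, α₂ ∈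 ℤ. -/

import Mathlib

/-! Formal power series `S(z) := (e^{z/2} − e^{−z/2})/z = Σ_{k≥0} z^{2k}/(4^k (2k+1)!)`
and `ζ̄(z) := e^{z/2} + e^{−z/2}` over `ℂ`, the series `T_α(z) := S(z)/S(αz)` and
`(1/T_α)(z) := S(αz)/S(z)` for `α ∈ ℤ`, and composition with linear forms
`c₁z₁ + c₂z₂` inside `ℂ[[z₁,z₂]]`. -/

/-- `ℂ[[z₁,z₂]]`; the variable `0` is `z₁` and the variable `1` is `z₂`. -/
abbrev M2 : Type := MvPowerSeries (Fin 2) ℂ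

/-- `S(z) := (e^{z/2} − e^{−z/2})/z = Σ_{k≥0} z^{2k}/(4^k (2k+1)!)`. -/
noncomputable def Sser : PowerSeries ℂ :=
  PowerSeries.mk fun n => if Even n then 1 / (4 ^ (n / 2) * (n + 1).factorial) else 0

/-- `ζ̄(z) := e^{z/2} + e^{−z/2} = Σ_{n≥0} ((1/2)^n + (−1/2)^n) z^n / n!`. -/
noncomputable def Zser : PowerSeries ℂ :=
  PowerSeries.mk fun n => ((1 / 2 : ℂ) ^ n + (-1 / 2 : ℂ) ^ n) / n.factorial

/-- `T_α(z) := S(z)/S(αz)`, a well-defined power series since `S(0) = 1`. -/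
noncomputable def Tser (α : ℤ) : PowerSeries ℂ :=
  Sser * (PowerSeries.rescale (α : ℂ) Sser)⁻¹

/-- `(1/T_α)(z) := S(αz)/S(z)`, a well-defined power series since `S(0) = 1`. -/
noncomputable def Tinv (α : ℤ) : PowerSeries ℂ :=
  PowerSeries.rescale (α : ℂ) Sser * Sser⁻¹

/-- Composition `P(c₁z₁ + c₂z₂) ∈ ℂ[[z₁,z₂]]` of a one-variable power series `P` with a
linear form: the coefficient of `z₁^{i}z₂^{j}` is `P_{i+j}·C(i+j,i)·c₁^i·c₂^j`. -/
noncomputable def compLin (P : PowerSeries ℂ) (c1 c2 : ℂ) : M2 := fun m =>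
  PowerSeries.coeff (m 0 + m 1) P * ((m 0 + m 1).choose (m 0) : ℂ) *
    c1 ^ (m 0) * c2 ^ (m 1)

/-- The operator `1 + z₁∂_{z₁} + z₂∂_{z₂}` on `ℂ[[z₁,z₂]]`. -/
noncomputable def eulerOp (f : M2) : M2 := fun m => ((m 0 + m 1 + 1 : ℕ) : ℂ) * f m

/-- The operator `z·d/dz` on `ℂ[[z]]`. -/
noncomputable def zddz (P : PowerSeries ℂ) : PowerSeries ℂ :=
  PowerSeries.mk fun n => (n : ℂ) * PowerSeries.coeff n P

/-- The generating series `A_{α₁,α₂}(z₁,z₂) := Σ_{k₁,k₂≥0} A_{α₁,k₁;α₂,k₂} z₁^{k₁} z₂^{k₂}`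
of a coefficient family `A`. -/
noncomputable def genFun (A : ℤ → ℕ → ℤ → ℕ → ℂ) (α₁ α₂ : ℤ) : M2 := fun m =>
  A α₁ (m 0) α₂ (m 1)

/-- The one-variable series `Σ_{h≥1} A_{0,1;α,2h−1} z^{2h}`. -/
noncomputable def Hser (A : ℤ → ℕ → ℤ → ℕ → ℂ) (α : ℤ) : PowerSeries ℂ :=
  PowerSeries.mk fun n => if 2 ≤ n ∧ Even n then A 0 1 α (n - 1) else 0

/-!
Expanding the Euler operator by the Leibniz rule, and using `(zS)' = ζ̄/2` and
`z(1/T_α)' = (1/T_α)·H_α` with `H_α := T_α·z(1/T_α)'`, the identity for `(α₁, α₂)` becomes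
`A_{α₁,α₂}·(1/T_{α₁})(z₁)·(1/T_{α₂})(z₂) = (1/T_α)(z₁+z₂)·[ζ̄(L)/2 + S(L)·(H_α − H)(z₁+z₂)]`
with `L = α₁z₂ − α₂z₁` and `H = Σ_{h≥1} A_{0,1;α,2h−1} z^{2h}`, so it suffices to show `H = H_α`.
For `(α₁, α₂) = (0, α)` apply `∂/∂z₁` and set `z₁ = 0`: by the parity condition the left side
gives `H/z`, while `S` and `ζ̄` are even, so `D := H_α − H` satisfies `D + zD' + H_α·D = 0`.
Then `F := (1/T_α)·D` satisfies `F + zF' = 0`, which forces `F = 0`.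
-/

open Finsupp

lemma finsupp_fin_two_eq_iff {m n : Fin 2 →₀ ℕ} : m = n ↔ m 0 = n 0 ∧ m 1 = n 1 := by
  rw [Finsupp.ext_iff, Fin.forall_fin_two]

lemma coeff_linForm_pow (c₁ c₂ : ℂ) (d : ℕ) (m : Fin 2 →₀ ℕ) :
    MvPowerSeries.coeff m ((c₁ • MvPowerSeries.X 0 + c₂ • MvPowerSeries.X 1 : M2) ^ d) =
      if m 0 + m 1 = d then (d.choose (m 0) : ℂ) * c₁ ^ m 0 * c₂ ^ m 1 else 0 := by
  have hterm : ∀ k, (c₁ • MvPowerSeries.X 0 : M2) ^ k * (c₂ • MvPowerSeries.X 1) ^ (d - k) *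
      (d.choose k : M2) = MvPowerSeries.monomial (single 0 k + single 1 (d - k))
        (d.choose k * c₁ ^ k * c₂ ^ (d - k)) := by
    intro k
    rw [smul_pow, smul_pow, MvPowerSeries.X_pow_eq, MvPowerSeries.X_pow_eq, smul_mul_smul_comm,
      MvPowerSeries.monomial_mul_monomial, ← map_natCast MvPowerSeries.C,
      MvPowerSeries.smul_eq_C_mul, mul_assoc, ← MvPowerSeries.monomial_zero_eq_C,
      MvPowerSeries.monomial_mul_monomial, MvPowerSeries.monomial_mul_monomial, zero_add, add_zero]
    congr 1
    ring
  simp only [add_pow, map_sum, hterm, MvPowerSeries.coeff_monomial, finsupp_fin_two_eq_iff,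
    Finsupp.add_apply, single_eq_same, single_apply, one_ne_zero, zero_ne_one, if_false, add_zero,
    zero_add]
  split_ifs with h
  · rw [Finset.sum_eq_single (m 0) (fun k _ hk => by simp [Ne.symm hk])
      (fun hm => absurd (Finset.mem_range.mpr (by omega)) hm)]
    simp [← h]
  · refine Finset.sum_eq_zero fun k hk => if_neg ?_
    rw [Finset.mem_range] at hk
    omega

lemma hasSubst_linForm (c₁ c₂ : ℂ) :
    PowerSeries.HasSubst (c₁ • MvPowerSeries.X 0 + c₂ • MvPowerSeries.X 1 : M2) :=
  PowerSeries.HasSubst.of_constantCoeff_zero (by simp)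

lemma compLin_eq_subst (P : PowerSeries ℂ) (c₁ c₂ : ℂ) :
    compLin P c₁ c₂ = P.subst (c₁ • MvPowerSeries.X 0 + c₂ • MvPowerSeries.X 1 : M2) := by
  ext m
  rw [PowerSeries.coeff_subst (hasSubst_linForm c₁ c₂), finsum_eq_single _ (m 0 + m 1)]
  · simp only [coeff_linForm_pow, if_true, smul_eq_mul]
    simp only [compLin, MvPowerSeries.coeff_apply]
    ring
  · intro d hd
    rw [coeff_linForm_pow, if_neg (Ne.symm hd), smul_zero]

noncomputable def compLinAlgHom (c₁ c₂ : ℂ) : PowerSeries ℂ →ₐ[ℂ] M2 :=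
  PowerSeries.substAlgHom (hasSubst_linForm c₁ c₂)

lemma compLinAlgHom_apply (c₁ c₂ : ℂ) (P : PowerSeries ℂ) :
    compLinAlgHom c₁ c₂ P = compLin P c₁ c₂ := by
  rw [compLinAlgHom, PowerSeries.coe_substAlgHom, compLin_eq_subst]

lemma compLin_add (P Q : PowerSeries ℂ) (c₁ c₂ : ℂ) :
    compLin (P + Q) c₁ c₂ = compLin P c₁ c₂ + compLin Q c₁ c₂ := by
  simp only [← compLinAlgHom_apply, map_add]

lemma compLin_sub (P Q : PowerSeries ℂ) (c₁ c₂ : ℂ) :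
    compLin (P - Q) c₁ c₂ = compLin P c₁ c₂ - compLin Q c₁ c₂ := by
  simp only [← compLinAlgHom_apply, map_sub]

lemma compLin_mul (P Q : PowerSeries ℂ) (c₁ c₂ : ℂ) :
    compLin (P * Q) c₁ c₂ = compLin P c₁ c₂ * compLin Q c₁ c₂ := by
  simp only [← compLinAlgHom_apply, map_mul]

lemma compLin_zero (c₁ c₂ : ℂ) : compLin 0 c₁ c₂ = 0 := by
  rw [← compLinAlgHom_apply, map_zero]

lemma compLin_one (c₁ c₂ : ℂ) : compLin 1 c₁ c₂ = 1 := by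
  rw [← compLinAlgHom_apply, map_one]

lemma compLin_smul (r : ℂ) (P : PowerSeries ℂ) (c₁ c₂ : ℂ) :
    compLin (r • P) c₁ c₂ = r • compLin P c₁ c₂ := by
  simp only [← compLinAlgHom_apply, map_smul]

noncomputable def degreeOp (f : M2) : M2 := fun m => ((m 0 + m 1 : ℕ) : ℂ) * f m

lemma coeff_degreeOp (f : M2) (m : Fin 2 →₀ ℕ) :
    MvPowerSeries.coeff m (degreeOp f) = ((m 0 + m 1 : ℕ) : ℂ) * MvPowerSeries.coeff m f := rfl

lemma eulerOp_eq_add_degreeOp (f : M2) : eulerOp f = f + degreeOp f := by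
  ext m
  simp only [eulerOp, degreeOp, map_add, MvPowerSeries.coeff_apply]
  push_cast
  ring

lemma degreeOp_mul (f g : M2) : degreeOp (f * g) = degreeOp f * g + f * degreeOp g := by
  ext m
  rw [coeff_degreeOp, map_add, MvPowerSeries.coeff_mul, MvPowerSeries.coeff_mul,
    MvPowerSeries.coeff_mul, Finset.mul_sum, ← Finset.sum_add_distrib]
  refine Finset.sum_congr rfl fun p hp => ?_
  rw [Finset.HasAntidiagonal.mem_antidiagonal] at hp
  rw [coeff_degreeOp, coeff_degreeOp, ← hp]
  simp only [Finsupp.add_apply]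
  push_cast
  ring

lemma degreeOp_compLin (P : PowerSeries ℂ) (c₁ c₂ : ℂ) :
    degreeOp (compLin P c₁ c₂) = compLin (zddz P) c₁ c₂ := by
  ext m
  simp only [degreeOp, compLin, zddz, PowerSeries.coeff_mk, MvPowerSeries.coeff_apply]
  ring

lemma eulerOp_compLin_mul (P Q : PowerSeries ℂ) (c₁ c₂ d₁ d₂ : ℂ) :
    eulerOp (compLin P c₁ c₂ * compLin Q d₁ d₂) =
      compLin (P + zddz P) c₁ c₂ * compLin Q d₁ d₂ + compLin P c₁ c₂ * compLin (zddz Q) d₁ d₂ := by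
  rw [eulerOp_eq_add_degreeOp, degreeOp_mul, degreeOp_compLin, degreeOp_compLin,
    compLin_add]
  ring

namespace MvPowerSeries

variable {σ R : Type*} [CommSemiring R]

noncomputable def restrictAxis (i : σ) : MvPowerSeries σ R →ₐ[R] PowerSeries R where
  toFun f := PowerSeries.mk fun n => coeff (single i n) f
  map_one' := by
    ext n
    classical
    simp [coeff_one, PowerSeries.coeff_one]
  map_mul' f g := by
    classical
    ext n
    rw [PowerSeries.coeff_mk, coeff_mul, Finsupp.antidiagonal_single, Finset.sum_map,
      PowerSeries.coeff_mul]
    simp only [PowerSeries.coeff_mk]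
    rfl
  map_zero' := by ext; simp
  map_add' f g := by ext; simp
  commutes' r := by
    ext n
    classical
    simp [algebraMap_apply, coeff_C, PowerSeries.coeff_C]

lemma coeff_restrictAxis (i : σ) (f : MvPowerSeries σ R) (n : ℕ) :
    PowerSeries.coeff n (restrictAxis i f) = coeff (single i n) f := by
  simp [restrictAxis]

end MvPowerSeries

lemma PowerSeries.constantCoeff_derivative {R : Type*} [CommSemiring R] (P : PowerSeries R) :
    PowerSeries.constantCoeff (PowerSeries.derivative R P) = PowerSeries.coeff 1 P := by
  rw [← PowerSeries.coeff_zero_eq_constantCoeff_apply, PowerSeries.coeff_derivative]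
  simp

open MvPowerSeries in
noncomputable def pderivFstOnAxis : M2 →ₗ[ℂ] PowerSeries ℂ :=
  (restrictAxis 1).toLinearMap ∘ₗ (pderiv ℂ 0).toLinearMap

lemma pderivFstOnAxis_apply (f : M2) :
    pderivFstOnAxis f = MvPowerSeries.restrictAxis 1 (MvPowerSeries.pderiv ℂ 0 f) := rfl

lemma pderivFstOnAxis_mul (f g : M2) :
    pderivFstOnAxis (f * g) = MvPowerSeries.restrictAxis 1 f * pderivFstOnAxis g +
      pderivFstOnAxis f * MvPowerSeries.restrictAxis 1 g := by
  simp only [pderivFstOnAxis_apply, Derivation.leibniz, smul_eq_mul, map_add, map_mul]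
  ring

lemma restrictAxis_compLin (P : PowerSeries ℂ) (c₁ c₂ : ℂ) :
    MvPowerSeries.restrictAxis 1 (compLin P c₁ c₂) = PowerSeries.rescale c₂ P := by
  ext n
  simp [MvPowerSeries.coeff_restrictAxis, compLin, MvPowerSeries.coeff_apply, mul_comm]

lemma pderivFstOnAxis_compLin (P : PowerSeries ℂ) (c₁ c₂ : ℂ) :
    pderivFstOnAxis (compLin P c₁ c₂) =
      c₁ • PowerSeries.rescale c₂ (PowerSeries.derivative ℂ P) := by
  ext n
  rw [pderivFstOnAxis_apply, MvPowerSeries.coeff_restrictAxis, MvPowerSeries.coeff_pderiv]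
  simp only [MvPowerSeries.coeff_apply, compLin, coe_add, Pi.add_apply, single_eq_same,
    single_eq_of_ne zero_ne_one, single_eq_of_ne one_ne_zero, zero_add, add_zero, add_comm 1 n,
    Nat.choose_one_right, pow_one, map_smul, PowerSeries.coeff_rescale,
    PowerSeries.coeff_derivative, smul_eq_mul]
  push_cast
  ring

lemma pderivFstOnAxis_genFun (A : ℤ → ℕ → ℤ → ℕ → ℂ) (β γ : ℤ) :
    pderivFstOnAxis (genFun A β γ) = PowerSeries.mk (A β 1 γ) := by
  ext n
  rw [pderivFstOnAxis_apply, MvPowerSeries.coeff_restrictAxis, MvPowerSeries.coeff_pderiv]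
  simp [genFun, MvPowerSeries.coeff_apply]

lemma constantCoeff_Sser : PowerSeries.constantCoeff Sser = 1 := by
  simp [Sser, ← PowerSeries.coeff_zero_eq_constantCoeff_apply]

lemma coeff_one_Sser : PowerSeries.coeff 1 Sser = 0 := by
  simp [Sser]

lemma constantCoeff_Zser : PowerSeries.constantCoeff Zser = 2 := by
  norm_num [Zser, ← PowerSeries.coeff_zero_eq_constantCoeff_apply]

lemma coeff_one_Zser : PowerSeries.coeff 1 Zser = 0 := by
  norm_num [Zser]

lemma Sser_add_zddz_Sser : Sser + zddz Sser = (1 / 2 : ℂ) • Zser := by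
  ext n
  simp only [Sser, Zser, zddz, map_add, map_smul, PowerSeries.coeff_mk, smul_eq_mul]
  rcases Nat.even_or_odd n with hn | hn
  · have h4 : (4 : ℂ) ^ (n / 2) = 2 ^ n := by
      obtain ⟨k, rfl⟩ := hn
      rw [show (k + k) / 2 = k by omega, ← two_mul, pow_mul]
      norm_num
    have hf : (n.factorial : ℂ) ≠ 0 := Nat.cast_ne_zero.mpr (Nat.factorial_ne_zero _)
    have hn1 : (n + 1 : ℂ) ≠ 0 := Nat.cast_add_one_ne_zero _
    rw [if_pos hn, h4, show (-1 / 2 : ℂ) = -(1 / 2) by ring, hn.neg_pow, Nat.factorial_succ,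
      div_pow, one_pow]
    push_cast
    field_simp
    ring
  · rw [if_neg (Nat.not_even_iff_odd.mpr hn), show (-1 / 2 : ℂ) = -(1 / 2) by ring, hn.neg_pow]
    simp

lemma constantCoeff_rescale_Sser (c : ℂ) :
    PowerSeries.constantCoeff (PowerSeries.rescale c Sser) = 1 := by
  rw [← PowerSeries.coeff_zero_eq_constantCoeff_apply, PowerSeries.coeff_rescale, pow_zero,
    one_mul, PowerSeries.coeff_zero_eq_constantCoeff_apply, constantCoeff_Sser]

lemma Tinv_mul_Tser (α : ℤ) : Tinv α * Tser α = 1 := by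
  calc Tinv α * Tser α = (PowerSeries.rescale (α : ℂ) Sser * (PowerSeries.rescale (α : ℂ) Sser)⁻¹)
        * (Sser * Sser⁻¹) := by rw [Tinv, Tser]; ring
    _ = 1 := by
      rw [PowerSeries.mul_inv_cancel _ (by simp [constantCoeff_rescale_Sser]),
        PowerSeries.mul_inv_cancel _ (by simp [constantCoeff_Sser]), one_mul]

lemma Tser_zero : Tser 0 = Sser := by
  simp [Tser, constantCoeff_Sser]

lemma zddz_eq_X_mul_derivative (P : PowerSeries ℂ) :
    zddz P = PowerSeries.X * PowerSeries.derivative ℂ P := by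
  ext n
  rcases n with _ | n
  · simp [zddz]
  · simp only [zddz, PowerSeries.coeff_mk, PowerSeries.coeff_succ_X_mul,
      PowerSeries.coeff_derivative]
    push_cast
    ring

lemma zddz_mul (P Q : PowerSeries ℂ) : zddz (P * Q) = zddz P * Q + P * zddz Q := by
  simp only [zddz_eq_X_mul_derivative, Derivation.leibniz, smul_eq_mul]
  ring

lemma eq_zero_of_add_zddz_eq_zero {F : PowerSeries ℂ} (h : F + zddz F = 0) : F = 0 := by
  ext n
  have hn := congrArg (PowerSeries.coeff n) h
  simp only [zddz, map_add, PowerSeries.coeff_mk, map_zero] at hn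
  have : (n + 1 : ℂ) ≠ 0 := by exact_mod_cast n.succ_ne_zero
  simpa [this] using (show ((n : ℂ) + 1) * PowerSeries.coeff n F = 0 by linear_combination hn)

noncomputable def logDerivTinv (α : ℤ) : PowerSeries ℂ := Tser α * zddz (Tinv α)

lemma Tinv_mul_logDerivTinv (α : ℤ) : Tinv α * logDerivTinv α = zddz (Tinv α) := by
  rw [logDerivTinv, ← mul_assoc, Tinv_mul_Tser, one_mul]

lemma eulerOp_Sser_mul_Tinv (c₁ c₂ : ℂ) (α : ℤ) :
    eulerOp (compLin Sser c₁ c₂ * compLin (Tinv α) 1 1) =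
      (1 / 2 : ℂ) • (compLin Zser c₁ c₂ * compLin (Tinv α) 1 1) +
        compLin Sser c₁ c₂ * compLin (Tinv α) 1 1 * compLin (logDerivTinv α) 1 1 := by
  rw [eulerOp_compLin_mul, Sser_add_zddz_Sser, compLin_smul, ← Tinv_mul_logDerivTinv,
    compLin_mul, smul_mul_assoc]
  ring

def GenFunIdentity (A : ℤ → ℕ → ℤ → ℕ → ℂ) (α₁ α₂ : ℤ) : Prop :=
  eulerOp (compLin Sser (-(α₂ : ℂ)) (α₁ : ℂ) * compLin (Tinv (α₁ + α₂)) 1 1) =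
    genFun A α₁ α₂ * compLin (Tinv α₁) 1 0 * compLin (Tinv α₂) 0 1 +
      compLin Sser (-(α₂ : ℂ)) (α₁ : ℂ) * compLin (Tinv (α₁ + α₂)) 1 1 *
        compLin (Hser A (α₁ + α₂)) 1 1

lemma genFun_eq_of_genFunIdentity {A : ℤ → ℕ → ℤ → ℕ → ℂ} {α₁ α₂ : ℤ}
    (h : GenFunIdentity A α₁ α₂) :
    genFun A α₁ α₂ = compLin (Tser α₁) 1 0 * compLin (Tser α₂) 0 1 *
      compLin (Tinv (α₁ + α₂)) 1 1 * ((1 / 2 : ℂ) • compLin Zser (-(α₂ : ℂ)) (α₁ : ℂ) +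
        compLin Sser (-(α₂ : ℂ)) (α₁ : ℂ) *
          compLin (logDerivTinv (α₁ + α₂) - Hser A (α₁ + α₂)) 1 1) := by
  have hU₁ : compLin (Tinv α₁) 1 0 * compLin (Tser α₁) 1 0 = 1 := by
    rw [← compLin_mul, Tinv_mul_Tser, compLin_one]
  have hU₂ : compLin (Tinv α₂) 0 1 * compLin (Tser α₂) 0 1 = 1 := by
    rw [← compLin_mul, Tinv_mul_Tser, compLin_one]
  rw [GenFunIdentity, eulerOp_Sser_mul_Tinv] at h
  rw [compLin_sub]
  -- multiply `h` by `T_{α₁}(z₁)·T_{α₂}(z₂)`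
  simp only [MvPowerSeries.smul_eq_C_mul] at h ⊢
  linear_combination (-genFun A α₁ α₂) * hU₁ -
    genFun A α₁ α₂ * compLin (Tinv α₁) 1 0 * compLin (Tser α₁) 1 0 * hU₂ -
    compLin (Tser α₁) 1 0 * compLin (Tser α₂) 0 1 * h

lemma Hser_eq_X_mul {A : ℤ → ℕ → ℤ → ℕ → ℂ}
    (hodd : ∀ (β : ℤ) (k₁ : ℕ) (γ : ℤ) (k₂ : ℕ), ¬ Even (k₁ + k₂) → A β k₁ γ k₂ = 0) (α : ℤ) :
    Hser A α = PowerSeries.X * PowerSeries.mk (A 0 1 α) := by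
  ext n
  rcases n with _ | k
  · simp [Hser]
  · rw [PowerSeries.coeff_succ_X_mul, PowerSeries.coeff_mk, Hser, PowerSeries.coeff_mk]
    split_ifs with h
    · rfl
    · refine (hodd 0 1 α k fun hk => h ?_).symm
      rw [add_comm] at hk
      have hk0 : k ≠ 0 := by
        rintro rfl
        exact Nat.not_even_one hk
      exact ⟨by omega, hk⟩

lemma Hser_eq_logDerivTinv {A : ℤ → ℕ → ℤ → ℕ → ℂ}
    (hodd : ∀ (β : ℤ) (k₁ : ℕ) (γ : ℤ) (k₂ : ℕ), ¬ Even (k₁ + k₂) → A β k₁ γ k₂ = 0) {α : ℤ}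
    (h : GenFunIdentity A 0 α) : Hser A α = logDerivTinv α := by
  set D := logDerivTinv α - Hser A α
  have hG := genFun_eq_of_genFunIdentity h
  rw [zero_add, Int.cast_zero, Tser_zero] at hG
  set V := compLin Sser 1 0 * compLin (Tser α) 0 1 * compLin (Tinv α) 1 1
  set W := (1 / 2 : ℂ) • compLin Zser (-(α : ℂ)) 0 + compLin Sser (-(α : ℂ)) 0 * compLin D 1 1
  have hV_restrict : MvPowerSeries.restrictAxis 1 V = 1 := by
    simp only [V, map_mul, restrictAxis_compLin, PowerSeries.rescale_zero_apply,
      PowerSeries.rescale_one, RingHom.id_apply, constantCoeff_Sser, map_one, one_mul]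
    rw [mul_comm, Tinv_mul_Tser]
  have hV_pderiv : pderivFstOnAxis V = Tser α * PowerSeries.derivative ℂ (Tinv α) := by
    simp only [V, pderivFstOnAxis_mul, map_mul, restrictAxis_compLin, pderivFstOnAxis_compLin,
      PowerSeries.rescale_zero_apply, PowerSeries.rescale_one, RingHom.id_apply,
      constantCoeff_Sser, PowerSeries.constantCoeff_derivative, coeff_one_Sser, map_zero, map_one,
      zero_smul, one_smul]
    ring
  have hW_restrict : MvPowerSeries.restrictAxis 1 W = 1 + D := by
    simp only [W, map_add, map_mul, map_smul, restrictAxis_compLin, PowerSeries.rescale_zero_apply,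
      PowerSeries.rescale_one, RingHom.id_apply, constantCoeff_Sser, constantCoeff_Zser, map_one,
      one_mul]
    rw [PowerSeries.smul_eq_C_mul, ← map_mul]
    norm_num
  have hW_pderiv : pderivFstOnAxis W = PowerSeries.derivative ℂ D := by
    simp only [W, pderivFstOnAxis_mul, map_add, map_smul, restrictAxis_compLin,
      pderivFstOnAxis_compLin, PowerSeries.rescale_zero_apply, PowerSeries.rescale_one,
      RingHom.id_apply, constantCoeff_Sser, PowerSeries.constantCoeff_derivative, coeff_one_Sser,
      coeff_one_Zser, map_zero, map_one, smul_zero, one_smul, one_mul, zero_mul, zero_add, add_zero]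
  have hA : PowerSeries.mk (A 0 1 α) =
      PowerSeries.derivative ℂ D + Tser α * PowerSeries.derivative ℂ (Tinv α) * (1 + D) := by
    rw [← pderivFstOnAxis_genFun, hG, pderivFstOnAxis_mul, hV_restrict, hV_pderiv, hW_restrict,
      hW_pderiv, one_mul]
  have hH : Hser A α = zddz D + logDerivTinv α * (1 + D) := by
    rw [Hser_eq_X_mul hodd, hA, logDerivTinv, zddz_eq_X_mul_derivative,
      zddz_eq_X_mul_derivative]
    ring
  have hF : Tinv α * D + zddz (Tinv α * D) = 0 := by
    rw [zddz_mul, ← Tinv_mul_logDerivTinv]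
    linear_combination (-Tinv α) * hH
  have hD0 : D = 0 := by
    rw [← one_mul D, ← Tinv_mul_Tser α, mul_comm (Tinv α), mul_assoc,
      eq_zero_of_add_zddz_eq_zero hF, mul_zero]
  exact (sub_eq_zero.mp hD0).symm

theorem A_uniquely_determined_general (A : ℤ → ℕ → ℤ → ℕ → ℂ)
    (hodd : ∀ (β : ℤ) (k₁ : ℕ) (γ : ℤ) (k₂ : ℕ), ¬ Even (k₁ + k₂) → A β k₁ γ k₂ = 0)
    (heq : ∀ α₁ α₂ : ℤ,
      eulerOp (compLin Sser (-(α₂ : ℂ)) (α₁ : ℂ) * compLin (Tinv (α₁ + α₂)) 1 1) =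
        genFun A α₁ α₂ * compLin (Tinv α₁) 1 0 * compLin (Tinv α₂) 0 1 +
          compLin Sser (-(α₂ : ℂ)) (α₁ : ℂ) * compLin (Tinv (α₁ + α₂)) 1 1 *
            compLin (Hser A (α₁ + α₂)) 1 1) :
    ∀ α₁ α₂ : ℤ,
      genFun A α₁ α₂ =
        (1 / 2 : ℂ) •
          (compLin (Tser α₁) 1 0 * compLin (Tser α₂) 0 1 *
            compLin (Tinv (α₁ + α₂)) 1 1 * compLin Zser (-(α₂ : ℂ)) (α₁ : ℂ)) := by
  intro α₁ α₂
  rw [genFun_eq_of_genFunIdentity (heq α₁ α₂), Hser_eq_logDerivTinv hodd (heq 0 (α₁ + α₂)),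
    sub_self, compLin_zero, mul_zero, add_zero, mul_smul_comm]

/-- Uniqueness of the coefficient family `A`: if `A_{β,k₁;γ,k₂} ∈ ℂ`
is symmetric, vanishes when `k₁+k₂` is odd, and for all `α₁,α₂ ∈ ℤ` (with `α = α₁+α₂`)
satisfies
`(1 + z₁∂_{z₁} + z₂∂_{z₂})[S(α₁z₂−α₂z₁)(1/T_α)(z₁+z₂)]
= A_{α₁,α₂}(z₁,z₂)·(1/T_{α₁})(z₁)·(1/T_{α₂})(z₂)
+ S(α₁z₂−α₂z₁)(1/T_α)(z₁+z₂)·Σ_{h≥1}A_{0,1;α,2h−1}(z₁+z₂)^{2h}`,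
then `A` is uniquely determined; in fact
`A_{α₁,α₂}(z₁,z₂) = (T_{α₁}(z₁)T_{α₂}(z₂)/T_{α₁+α₂}(z₁+z₂))·(ζ̄(α₁z₂−α₂z₁)/2)`. -/
theorem A_uniquely_determined (A : ℤ → ℕ → ℤ → ℕ → ℂ)
    (hsym : ∀ (β : ℤ) (k₁ : ℕ) (γ : ℤ) (k₂ : ℕ), A β k₁ γ k₂ = A γ k₂ β k₁)
    (hodd : ∀ (β : ℤ) (k₁ : ℕ) (γ : ℤ) (k₂ : ℕ), ¬ Even (k₁ + k₂) → A β k₁ γ k₂ = 0)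
    (heq : ∀ α₁ α₂ : ℤ,
      eulerOp (compLin Sser (-(α₂ : ℂ)) (α₁ : ℂ) * compLin (Tinv (α₁ + α₂)) 1 1) =
        genFun A α₁ α₂ * compLin (Tinv α₁) 1 0 * compLin (Tinv α₂) 0 1 +
          compLin Sser (-(α₂ : ℂ)) (α₁ : ℂ) * compLin (Tinv (α₁ + α₂)) 1 1 *
            compLin (Hser A (α₁ + α₂)) 1 1) :
    ∀ α₁ α₂ : ℤ,
      genFun A α₁ α₂ =
        (1 / 2 : ℂ) •
          (compLin (Tser α₁) 1 0 * compLin (Tser α₂) 0 1 *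
            compLin (Tinv (α₁ + α₂)) 1 1 * compLin Zser (-(α₂ : ℂ)) (α₁ : ℂ)) :=
  A_uniquely_determined_general A hodd heq
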